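/- arXiv:1712.05363 — 2 statements merged into one kernel-verified Lean document; each statement's English description precedes it below -/
import Mathlib

section
/- The symmetrized empirical distribution map ιₙ : Xₙ → PX, sending the multiset {x₁,…,xₙ} to the uniform measure (1/n)(δ(x₁)+…+δ(xₙ)), is an isometric embedding, where Xₙ carries the metric d({xᵢ},{yᵢ}) = min over permutations σ of (1/n) Σᵢ d(xᵢ, y_{σ(i)}) and PX carries the 1-Wasserstein distance. -/
open MeasureTheory
open scoped ENNReal

/-- The 1-Wasserstein distance, defined as the infimum over all couplings of the
expected distance. -/
noncomputable def W1 {X : Type*} [MeasurableSpace X] [PseudoEMetricSpace X]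
    (p q : Measure X) : ℝ≥0∞ :=
  ⨅ r ∈ {r : Measure (X × X) | r.map Prod.fst = p ∧ r.map Prod.snd = q},
    ∫⁻ z, edist z.1 z.2 ∂r

/-! A coupling `r` of two empirical measures on `n` points is supported on the finitely many
pairs `(x i, y j)`; spreading the mass `r {(x i, y j)}` evenly over the index pairs of the two
fibres gives a doubly stochastic matrix whose transport cost is `n` times that of `r`. By
Birkhoff's theorem this matrix is a convex combination of permutation matrices, so some
permutation matching is at least as cheap as `r`. Conversely every permutation `σ` gives the
coupling `(1/n) ∑ δ (x i, y (σ i))`, whose cost is the matching cost. -/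

open Finset

theorem ENNReal.exists_perm_sum_le_sum_mul {n : Type*} [Fintype n] [DecidableEq n]
    {M : n → n → ℝ≥0∞} (hrow : ∀ i, ∑ j, M i j = 1) (hcol : ∀ j, ∑ i, M i j = 1)
    (C : n → n → ℝ≥0∞) :
    ∃ σ : Equiv.Perm n, ∑ i, C i (σ i) ≤ ∑ i, ∑ j, M i j * C i j := by
  have hM_ne_top i j : M i j ≠ ⊤ := by
    refine ne_top_of_le_ne_top ?_ (single_le_sum (fun _ _ => zero_le) (mem_univ j))
    simp [hrow]
  have hA : (fun i j => (M i j).toReal : Matrix n n ℝ) ∈ doublyStochastic ℝ n := by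
    refine mem_doublyStochastic_iff_sum.2
      ⟨fun _ _ => ENNReal.toReal_nonneg, fun i => ?_, fun j => ?_⟩
    · rw [← ENNReal.toReal_sum fun j _ => hM_ne_top i j, hrow, ENNReal.toReal_one]
    · rw [← ENNReal.toReal_sum fun i _ => hM_ne_top i j, hcol, ENNReal.toReal_one]
  obtain ⟨w, hw_nonneg, hw_sum, hwM⟩ := exists_eq_sum_perm_of_mem_doublyStochastic hA
  have hM i j : M i j = ∑ σ : Equiv.Perm n, if σ i = j then ENNReal.ofReal (w σ) else 0 := by
    have hMij : (M i j).toReal = ∑ σ : Equiv.Perm n, if σ i = j then w σ else 0 := by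
      simpa [Matrix.sum_apply, Equiv.Perm.permMatrix, PEquiv.toMatrix_apply,
        Equiv.toPEquiv_apply] using (congr_fun (congr_fun hwM i) j).symm
    rw [← ENNReal.ofReal_toReal (hM_ne_top i j), hMij,
      ENNReal.ofReal_sum_of_nonneg fun σ _ => by split_ifs <;> simp [hw_nonneg]]
    simp only [apply_ite ENNReal.ofReal, ENNReal.ofReal_zero]
  obtain ⟨σ₀, hσ₀⟩ := Finite.exists_min fun σ : Equiv.Perm n => ∑ i, C i (σ i)
  refine ⟨σ₀, ?_⟩
  calc ∑ i, C i (σ₀ i) = ∑ σ, ENNReal.ofReal (w σ) * ∑ i, C i (σ₀ i) := by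
        rw [← sum_mul, ← ENNReal.ofReal_sum_of_nonneg fun σ _ => hw_nonneg σ, hw_sum,
          ENNReal.ofReal_one, one_mul]
    _ ≤ ∑ σ, ENNReal.ofReal (w σ) * ∑ i, C i (σ i) :=
        sum_le_sum fun σ _ => mul_le_mul_right (hσ₀ σ) _
    _ = ∑ i, ∑ j, M i j * C i j := by
        simp only [hM, sum_mul, ite_mul, zero_mul, mul_sum]
        rw [sum_comm]
        refine sum_congr rfl fun i _ => ?_
        rw [sum_comm]
        simp

theorem ENNReal.sum_inv_card_fiber_mul {ι Y : Type*} [Fintype ι] [DecidableEq Y] (y : ι → Y)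
    (f : Y → ℝ≥0∞) :
    ∑ j, (#{l | y l = y j} : ℝ≥0∞)⁻¹ * f (y j) = ∑ t ∈ univ.image y, f t := by
  rw [sum_comp (fun t => (#{l | y l = t} : ℝ≥0∞)⁻¹ * f t) y]
  refine sum_congr rfl fun t ht => ?_
  obtain ⟨j, -, rfl⟩ := mem_image.1 ht
  have hfiber : (#{l | y l = y j} : ℝ≥0∞) ≠ 0 := by simp
  rw [nsmul_eq_mul, ← mul_assoc, ENNReal.mul_inv_cancel hfiber (ENNReal.natCast_ne_top _),
    one_mul]

section Empirical

variable {ι X Y : Type*} [Fintype ι] [MeasurableSpace X] [MeasurableSpace Y]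

noncomputable def empiricalMeasure (x : ι → X) : Measure X :=
  (Fintype.card ι : ℝ≥0∞)⁻¹ • ∑ i, Measure.dirac (x i)

theorem map_empiricalMeasure (x : ι → X) {f : X → Y} (hf : Measurable f) :
    (empiricalMeasure x).map f = empiricalMeasure (f ∘ x) := by
  rw [empiricalMeasure, Measure.map_smul, ← Measure.mapₗ_apply_of_measurable hf, map_sum]
  simp [empiricalMeasure, Measure.mapₗ_apply_of_measurable hf, Measure.map_dirac' hf]

theorem empiricalMeasure_comp_perm (x : ι → X) (σ : Equiv.Perm ι) :
    empiricalMeasure (x ∘ σ) = empiricalMeasure x := by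
  simp only [empiricalMeasure, Function.comp_apply, Equiv.sum_comp σ fun i => Measure.dirac (x i)]

variable [MeasurableSingletonClass X]

theorem lintegral_empiricalMeasure (x : ι → X) (f : X → ℝ≥0∞) :
    ∫⁻ a, f a ∂empiricalMeasure x = (Fintype.card ι : ℝ≥0∞)⁻¹ * ∑ i, f (x i) := by
  simp [empiricalMeasure, lintegral_finsetSum_measure]

variable [DecidableEq X]

theorem empiricalMeasure_singleton (x : ι → X) (s : X) :
    empiricalMeasure x {s} = (Fintype.card ι : ℝ≥0∞)⁻¹ * #{i | x i = s} := by
  simp [empiricalMeasure, Measure.finsetSum_apply, Set.indicator_apply, sum_boole]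

theorem empiricalMeasure_compl_image (x : ι → X) :
    empiricalMeasure x (↑(univ.image x))ᶜ = 0 := by
  simp [empiricalMeasure, Measure.finsetSum_apply, Measure.dirac_apply]

end Empirical

section Coupling

variable {X Y : Type*} [MeasurableSpace X] [MeasurableSpace Y]
  [MeasurableSingletonClass X] [MeasurableSingletonClass Y]

theorem MeasureTheory.Measure.fst_singleton_eq_sum (r : Measure (X × Y)) {T : Finset Y}
    (hT : r.snd (↑T)ᶜ = 0) (s : X) :
    r.fst {s} = ∑ t ∈ T, r {(s, t)} := by
  have hT' : r (Prod.snd ⁻¹' ↑T)ᶜ = 0 := by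
    rwa [← Set.preimage_compl, ← Measure.snd_apply T.measurableSet.compl]
  calc r.fst {s} = r (Prod.fst ⁻¹' {s} ∩ Prod.snd ⁻¹' ↑T) := by
        rw [measure_inter_conull hT', Measure.fst_apply (measurableSet_singleton s)]
    _ = r ↑({s} ×ˢ T) := by congr 1; ext ⟨a, b⟩; simp [eq_comm, and_comm]
    _ = ∑ t ∈ T, r {(s, t)} := by rw [← sum_measure_singleton, sum_product, sum_singleton]

theorem MeasureTheory.Measure.lintegral_eq_sum_of_marginals (r : Measure (X × Y))
    {S : Finset X} {T : Finset Y}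
    (hS : r.fst (↑S)ᶜ = 0) (hT : r.snd (↑T)ᶜ = 0) (f : X × Y → ℝ≥0∞) :
    ∫⁻ z, f z ∂r = ∑ s ∈ S, ∑ t ∈ T, r {(s, t)} * f (s, t) := by
  have hST : r (↑(S ×ˢ T))ᶜ = 0 := by
    rw [Measure.fst_apply S.measurableSet.compl] at hS
    rw [Measure.snd_apply T.measurableSet.compl] at hT
    refine measure_mono_null (fun z hz => ?_) (measure_union_null hS hT)
    simpa [or_iff_not_imp_left] using hz
  calc ∫⁻ z, f z ∂r = ∫⁻ z in ↑(S ×ˢ T), f z ∂r := by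
        congr 1; exact (Measure.restrict_eq_self_of_ae_mem (mem_ae_iff.2 hST)).symm
    _ = ∑ s ∈ S, ∑ t ∈ T, r {(s, t)} * f (s, t) := by
        simp only [lintegral_finset, sum_product, mul_comm]

variable {ι : Type*} [Fintype ι]

section CouplingMatrix

variable [DecidableEq X] [DecidableEq Y]

noncomputable def couplingMatrix (r : Measure (X × Y)) (x : ι → X) (y : ι → Y) (i j : ι) :
    ℝ≥0∞ :=
  Fintype.card ι * ((#{k | x k = x i} : ℝ≥0∞)⁻¹ * ((#{l | y l = y j} : ℝ≥0∞)⁻¹ * r {(x i, y j)}))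

theorem couplingMatrix_map_swap (r : Measure (X × Y)) (x : ι → X) (y : ι → Y) (i j : ι) :
    couplingMatrix (r.map Prod.swap) y x j i = couplingMatrix r x y i j := by
  rw [couplingMatrix, couplingMatrix, Measure.map_apply measurable_swap (measurableSet_singleton _),
    ← Set.image_swap_eq_preimage_swap, Set.image_singleton, Prod.swap_prod_mk, mul_left_comm
      (#{l | y l = y j} : ℝ≥0∞)⁻¹]

variable {r : Measure (X × Y)} {x : ι → X} {y : ι → Y}

theorem sum_couplingMatrix_row (hx : r.fst = empiricalMeasure x) (hy : r.snd = empiricalMeasure y)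
    (i : ι) : ∑ j, couplingMatrix r x y i j = 1 := by
  have : Nonempty ι := ⟨i⟩
  have hcard : (Fintype.card ι : ℝ≥0∞) ≠ 0 := by simp
  have hfiber : (#{k | x k = x i} : ℝ≥0∞) ≠ 0 := by simp
  have hy_null : r.snd (↑(univ.image y))ᶜ = 0 := hy ▸ empiricalMeasure_compl_image y
  calc ∑ j, couplingMatrix r x y i j
      = Fintype.card ι * ((#{k | x k = x i} : ℝ≥0∞)⁻¹ *
          ∑ j, (#{l | y l = y j} : ℝ≥0∞)⁻¹ * r {(x i, y j)}) := by
        simp only [couplingMatrix, mul_sum]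
    _ = Fintype.card ι * ((#{k | x k = x i} : ℝ≥0∞)⁻¹ * r.fst {x i}) := by
        rw [ENNReal.sum_inv_card_fiber_mul y fun t => r {(x i, t)},
          r.fst_singleton_eq_sum hy_null]
    _ = (Fintype.card ι * (Fintype.card ι : ℝ≥0∞)⁻¹) *
          ((#{k | x k = x i} : ℝ≥0∞)⁻¹ * #{k | x k = x i}) := by
        rw [hx, empiricalMeasure_singleton]; ring
    _ = 1 := by
        rw [ENNReal.mul_inv_cancel hcard (ENNReal.natCast_ne_top _),
          ENNReal.inv_mul_cancel hfiber (ENNReal.natCast_ne_top _), one_mul]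

theorem sum_couplingMatrix_col (hx : r.fst = empiricalMeasure x) (hy : r.snd = empiricalMeasure y)
    (j : ι) : ∑ i, couplingMatrix r x y i j = 1 := by
  simpa only [couplingMatrix_map_swap] using
    sum_couplingMatrix_row (r := r.map Prod.swap) (by rwa [Measure.fst_map_swap])
      (by rwa [Measure.snd_map_swap]) j

theorem sum_couplingMatrix_mul (hx : r.fst = empiricalMeasure x) (hy : r.snd = empiricalMeasure y)
    (c : X × Y → ℝ≥0∞) :
    ∑ i, ∑ j, couplingMatrix r x y i j * c (x i, y j) = Fintype.card ι * ∫⁻ z, c z ∂r := by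
  have hx_null : r.fst (↑(univ.image x))ᶜ = 0 := hx ▸ empiricalMeasure_compl_image x
  have hy_null : r.snd (↑(univ.image y))ᶜ = 0 := hy ▸ empiricalMeasure_compl_image y
  calc ∑ i, ∑ j, couplingMatrix r x y i j * c (x i, y j)
      = Fintype.card ι * ∑ i, (#{k | x k = x i} : ℝ≥0∞)⁻¹ *
          ∑ j, (#{l | y l = y j} : ℝ≥0∞)⁻¹ * (r {(x i, y j)} * c (x i, y j)) := by
        simp only [couplingMatrix, mul_sum, mul_assoc]
    _ = Fintype.card ι * ∑ i, (#{k | x k = x i} : ℝ≥0∞)⁻¹ *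
          ∑ t ∈ univ.image y, r {(x i, t)} * c (x i, t) := by
        congr 1
        exact sum_congr rfl fun i _ => by
          rw [ENNReal.sum_inv_card_fiber_mul y fun t => r {(x i, t)} * c (x i, t)]
    _ = Fintype.card ι * ∑ s ∈ univ.image x, ∑ t ∈ univ.image y, r {(s, t)} * c (s, t) := by
        rw [ENNReal.sum_inv_card_fiber_mul x fun s => ∑ t ∈ univ.image y, r {(s, t)} * c (s, t)]
    _ = Fintype.card ι * ∫⁻ z, c z ∂r := by
        rw [r.lintegral_eq_sum_of_marginals hx_null hy_null]

end CouplingMatrix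

theorem iInf_perm_le_lintegral_of_coupling [Nonempty ι] {r : Measure (X × Y)} {x : ι → X}
    {y : ι → Y} (hx : r.fst = empiricalMeasure x)
    (hy : r.snd = empiricalMeasure y) (c : X × Y → ℝ≥0∞) :
    ⨅ σ : Equiv.Perm ι, (Fintype.card ι : ℝ≥0∞)⁻¹ * ∑ i, c (x i, y (σ i)) ≤ ∫⁻ z, c z ∂r := by
  classical
  obtain ⟨σ, hσ⟩ := ENNReal.exists_perm_sum_le_sum_mul (sum_couplingMatrix_row hx hy)
    (sum_couplingMatrix_col hx hy) fun i j => c (x i, y j)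
  rw [sum_couplingMatrix_mul hx hy] at hσ
  have hcard : (Fintype.card ι : ℝ≥0∞) ≠ 0 := by simp
  calc ⨅ σ : Equiv.Perm ι, (Fintype.card ι : ℝ≥0∞)⁻¹ * ∑ i, c (x i, y (σ i))
      ≤ (Fintype.card ι : ℝ≥0∞)⁻¹ * (Fintype.card ι * ∫⁻ z, c z ∂r) :=
        iInf_le_of_le σ (mul_le_mul_right hσ _)
    _ = ∫⁻ z, c z ∂r := by
        rw [← mul_assoc, ENNReal.inv_mul_cancel hcard (ENNReal.natCast_ne_top _), one_mul]

end Coupling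

theorem W1_empiricalMeasure {ι X : Type*} [Fintype ι] [Nonempty ι] [PseudoEMetricSpace X]
    [MeasurableSpace X] [MeasurableSingletonClass X] (x y : ι → X) :
    W1 (empiricalMeasure x) (empiricalMeasure y) =
      ⨅ σ : Equiv.Perm ι, (Fintype.card ι : ℝ≥0∞)⁻¹ * ∑ i, edist (x i) (y (σ i)) := by
  refine le_antisymm (le_iInf fun σ => ?_)
    (le_iInf₂ fun r hr => iInf_perm_le_lintegral_of_coupling hr.1 hr.2 _)
  refine iInf₂_le_of_le (empiricalMeasure fun i => (x i, y (σ i))) ⟨?_, ?_⟩ ?_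
  · exact map_empiricalMeasure _ measurable_fst
  · rw [map_empiricalMeasure _ measurable_snd]
    exact empiricalMeasure_comp_perm y σ
  · exact (lintegral_empiricalMeasure _ _).le

/-- The symmetrized empirical distribution map is an isometric embedding: the
1-Wasserstein distance between the two uniform measures on `n` points equals the
normalized optimal-matching distance between the multisets. -/
theorem stmt13 {X : Type*} [MetricSpace X] [MeasurableSpace X] [BorelSpace X]
    (n : ℕ) (hn : 0 < n) (x y : Fin n → X) :
    W1 ((n : ℝ≥0∞)⁻¹ • ∑ i, Measure.dirac (x i)) ((n : ℝ≥0∞)⁻¹ • ∑ i, Measure.dirac (y i)) =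
      ⨅ σ : Equiv.Perm (Fin n), (n : ℝ≥0∞)⁻¹ * ∑ i, edist (x i) (y (σ i)) := by
  have : Nonempty (Fin n) := ⟨⟨0, hn⟩⟩
  simpa only [empiricalMeasure, Fintype.card_fin] using W1_empiricalMeasure x y
end

section
/- For a metric space X and positive integers m, n, the map Xₘ → X_{mn} sending a multiset {x₁,…,xₘ} to its n-fold repetition {x₁,…,xₘ,…,x₁,…,xₘ} is an isometric embedding, where X_k carries the matching metric d({xᵢ},{yᵢ}) = min_σ (1/k) Σᵢ d(xᵢ, y_{σ(i)}). -/
open Finset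

/-- The `n`-fold repetition map `Xₘ → X_{mn}` on multisets is an isometric embedding for
the normalized optimal-matching metrics. Multisets of size `mn` are indexed by
`Fin m × Fin n`, and the repetition of `x : Fin m → X` is `x ∘ Prod.fst`. -/
theorem stmt14 {X : Type*} [MetricSpace X] (m n : ℕ) (hm : 0 < m) (hn : 0 < n)
    (x y : Fin m → X) :
    (⨅ σ : Equiv.Perm (Fin m × Fin n),
        (1 / (m * n) : ℝ) * ∑ k : Fin m × Fin n, dist (x (σ k).1) (y k.1)) =
      ⨅ σ : Equiv.Perm (Fin m), (1 / m : ℝ) * ∑ i, dist (x (σ i)) (y i) := by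
  have : NeZero n := ⟨hn.ne'⟩
  have : NeZero m := ⟨hm.ne'⟩
  have hm' : (0:ℝ) < m := by exact_mod_cast hm
  have hn' : (0:ℝ) < n := by exact_mod_cast hn
  apply le_antisymm
  · -- inf over big ≤ inf over small: each τ gives prodCongr τ (refl)
    apply le_ciInf; intro τ
    refine (ciInf_le (Finite.bddBelow_range _)
      (Equiv.prodCongr τ (Equiv.refl (Fin n)))).trans_eq ?_
    have hs : ∑ k : Fin m × Fin n,
        dist (x ((Equiv.prodCongr τ (Equiv.refl (Fin n))) k).1) (y k.1)
        = (n : ℝ) * ∑ i, dist (x (τ i)) (y i) := by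
      simp [Fintype.sum_prod_type, mul_sum]
    rw [hs, ← mul_assoc]
    congr 1
    field_simp
  · apply le_ciInf; intro σ
    set c : Fin m → Fin m → ℝ := fun i j => dist (x i) (y j) with hc
    set A : Fin m → Fin m → ℕ := fun i j =>
      (univ.filter fun k : Fin m × Fin n => (σ k).1 = i ∧ k.1 = j).card with hA
    have hfib1 : ∀ i : Fin m, (univ.filter fun k : Fin m × Fin n => k.1 = i).card = n := by
      intro i
      have h : (univ.filter fun k : Fin m × Fin n => k.1 = i) = {i} ×ˢ univ := by
        ext k
        simp only [mem_filter, mem_univ, true_and, Finset.mem_product,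
          Finset.mem_singleton, and_true]
      simp [h]
    have hfib2 : ∀ i : Fin m, (univ.filter fun k : Fin m × Fin n => (σ k).1 = i).card = n := by
      intro i
      refine Eq.trans ?_ (hfib1 i)
      apply Finset.card_bij (fun k _ => σ k)
      · intro k hk; simp only [mem_filter, mem_univ, true_and] at hk ⊢; exact hk
      · intro a _ b _ h; exact σ.injective h
      · intro b hb
        simp only [mem_filter, mem_univ, true_and] at hb
        exact ⟨σ.symm b, by simp [hb], by simp⟩
    have hrow : ∀ i, ∑ j, A i j = n := by
      intro i
      calc ∑ j, A i j = (univ.filter fun k : Fin m × Fin n => (σ k).1 = i).card := by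
            rw [Finset.card_eq_sum_card_fiberwise
              (f := Prod.fst) (t := univ) (fun _ _ => mem_univ _)]
            refine Finset.sum_congr rfl fun j _ => ?_
            simp only [hA]
            rw [Finset.filter_filter]
        _ = n := hfib2 i
    have hcol : ∀ j, ∑ i, A i j = n := by
      intro j
      calc ∑ i, A i j = (univ.filter fun k : Fin m × Fin n => k.1 = j).card := by
            rw [Finset.card_eq_sum_card_fiberwise
              (f := fun k => (σ k).1) (t := univ) (fun _ _ => mem_univ _)]
            refine Finset.sum_congr rfl fun i _ => ?_
            simp only [hA]
            rw [Finset.filter_filter]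
            congr 1
            ext k
            simp only [mem_filter, mem_univ, true_and]
            tauto
        _ = n := hfib1 j
    have hkey : ∑ k : Fin m × Fin n, dist (x (σ k).1) (y k.1)
        = ∑ p : Fin m × Fin m, (A p.1 p.2 : ℝ) * c p.1 p.2 := by
      rw [← Finset.sum_fiberwise univ (fun k : Fin m × Fin n => ((σ k).1, k.1))
        (fun k => dist (x (σ k).1) (y k.1))]
      apply Finset.sum_congr rfl
      intro p _
      have h1 : ∀ k ∈ univ.filter fun k : Fin m × Fin n => ((σ k).1, k.1) = p,
          dist (x (σ k).1) (y k.1) = c p.1 p.2 := by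
        intro k hk
        simp only [mem_filter, mem_univ, true_and, Prod.ext_iff] at hk
        rw [hc]; simp [← hk.1, ← hk.2]
      rw [Finset.sum_congr rfl h1, Finset.sum_const, nsmul_eq_mul]
      congr 2
      simp only [hA]
      congr 1
      ext k
      simp only [mem_filter, mem_univ, true_and, Prod.ext_iff]
    have hMds : (Matrix.of fun i j => (A i j : ℝ) / n) ∈ doublyStochastic ℝ (Fin m) := by
      rw [mem_doublyStochastic_iff_sum]
      refine ⟨fun i j => by simp only [Matrix.of_apply]; positivity, fun i => ?_, fun j => ?_⟩
      · simp only [Matrix.of_apply]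
        rw [← Finset.sum_div]
        rw [show (∑ j, (A i j : ℝ)) = (n : ℝ) by exact_mod_cast hrow i]
        field_simp
      · simp only [Matrix.of_apply]
        rw [← Finset.sum_div]
        rw [show (∑ i, (A i j : ℝ)) = (n : ℝ) by exact_mod_cast hcol j]
        field_simp
    obtain ⟨w, hw0, hw1, hwM⟩ := exists_eq_sum_perm_of_mem_doublyStochastic hMds
    have hent : ∀ i j, (A i j : ℝ) / n
        = ∑ τ : Equiv.Perm (Fin m), w τ * (Equiv.Perm.permMatrix ℝ τ) i j := by
      intro i j
      have h2 := congrFun (congrFun hwM i) j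
      simp only [Matrix.of_apply, Matrix.sum_apply, Matrix.smul_apply, smul_eq_mul] at h2
      exact h2.symm
    have hswap : ∑ p : Fin m × Fin m, ((A p.1 p.2 : ℝ) / n) * c p.1 p.2
        = ∑ τ : Equiv.Perm (Fin m), w τ * ∑ i, c i (τ i) := by
      simp_rw [hent, Finset.sum_mul]
      rw [Finset.sum_comm]
      apply Finset.sum_congr rfl
      intro τ _
      rw [Finset.mul_sum, Fintype.sum_prod_type]
      apply Finset.sum_congr rfl
      intro i _
      simp [Equiv.Perm.permMatrix, PEquiv.toMatrix_apply, Equiv.toPEquiv_apply]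
    have hbound : ∀ τ : Equiv.Perm (Fin m),
        (⨅ τ' : Equiv.Perm (Fin m), (1 / m : ℝ) * ∑ i, dist (x (τ' i)) (y i))
          ≤ (1 / m : ℝ) * ∑ i, c i (τ i) := by
      intro τ
      refine (ciInf_le (Finite.bddBelow_range _) τ⁻¹).trans_eq ?_
      congr 1
      rw [← Equiv.sum_comp τ (fun i => dist (x (τ⁻¹ i)) (y i))]
      simp [hc]
    have hval : (1 / (m * n : ℝ)) * ∑ k : Fin m × Fin n, dist (x (σ k).1) (y k.1)
        = ∑ τ : Equiv.Perm (Fin m), w τ * ((1 / m : ℝ) * ∑ i, c i (τ i)) := by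
      rw [hkey]
      have : ∑ p : Fin m × Fin m, (A p.1 p.2 : ℝ) * c p.1 p.2
          = (n : ℝ) * ∑ p : Fin m × Fin m, ((A p.1 p.2 : ℝ) / n) * c p.1 p.2 := by
        rw [Finset.mul_sum]
        apply Finset.sum_congr rfl
        intro p _
        field_simp
      rw [this, hswap, Finset.mul_sum, Finset.mul_sum]
      apply Finset.sum_congr rfl
      intro τ _
      field_simp
    rw [hval]
    calc (⨅ τ' : Equiv.Perm (Fin m), (1 / m : ℝ) * ∑ i, dist (x (τ' i)) (y i))
        = ∑ τ : Equiv.Perm (Fin m), w τ *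
            (⨅ τ' : Equiv.Perm (Fin m), (1 / m : ℝ) * ∑ i, dist (x (τ' i)) (y i)) := by
          rw [← Finset.sum_mul, hw1, one_mul]
      _ ≤ ∑ τ : Equiv.Perm (Fin m), w τ * ((1 / m : ℝ) * ∑ i, c i (τ i)) := by
          apply Finset.sum_le_sum
          intro τ _
          exact mul_le_mul_of_nonneg_left (hbound τ) (hw0 τ)
end
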